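/- Let m ≥ 0, β ≥ 0, γ ≥ 0, δ̃ ≥ 0, and z, u ∈ Q. Let ψ : E → ℝ be convex and m-strongly convex relative to d on Q, and let y ∈ Q be a δ̃-approximate minimizer of the function x ↦ ψ(x) + β·V[z](x) + γ·V[u](x) on Q. Then for all x ∈ Q: ψ(x) + β·V[z](x) + γ·V[u](x) ≥ ψ(y) + β·V[z](y) + γ·V[u](y) + (β + γ + m)·V[y](x) − δ̃. -/

import Mathlib

open RealInnerProductSpace Finset

/-- The Bregman divergence `V[y](x) = d(x) - d(y) - ⟪∇d(y), x - y⟫` generated by `d`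
with gradient map `Dd`. -/
noncomputable def breg {E : Type*} [NormedAddCommGroup E] [InnerProductSpace ℝ E]
    (d : E → ℝ) (Dd : E → E) (y x : E) : ℝ :=
  d x - d y - ⟪Dd y, x - y⟫

/-- `g` is a subgradient of `ψ` at `z` (relative to the set `Q`). -/
def IsSubgradOn {E : Type*} [NormedAddCommGroup E] [InnerProductSpace ℝ E]
    (Q : Set E) (ψ : E → ℝ) (z g : E) : Prop :=
  ∀ x ∈ Q, ψ z + ⟪g, x - z⟫ ≤ ψ x

/-- `ψ` is `m`-strongly convex relative to `d` on `Q`, where `V` is the Bregman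
divergence generated by `d`. -/
def StrongRelConvexOn {E : Type*} [NormedAddCommGroup E] [InnerProductSpace ℝ E]
    (Q : Set E) (V : E → E → ℝ) (m : ℝ) (ψ : E → ℝ) : Prop :=
  ∀ z ∈ Q, ∀ g : E, IsSubgradOn Q ψ z g → ∀ x ∈ Q, ψ z + ⟪g, x - z⟫ + m * V z x ≤ ψ x

/-- `y` is a `δ`-approximate minimizer of `Ψ` on `Q`: there exists a subgradient `h`
of `Ψ` at `y` such that `⟪h, x - y⟫ ≥ -δ` for all `x ∈ Q`. -/
def IsApproxMinOn {E : Type*} [NormedAddCommGroup E] [InnerProductSpace ℝ E]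
    (Q : Set E) (Ψ : E → ℝ) (δ : ℝ) (y : E) : Prop :=
  y ∈ Q ∧ ∃ h : E, IsSubgradOn Q Ψ y h ∧ ∀ x ∈ Q, -δ ≤ ⟪h, x - y⟫

/-! Write the objective as `ψ + φ` with `φ = β V[z] + γ V[u]`, which is differentiable with
gradient `β (∇d y - ∇d z) + γ (∇d y - ∇d u)` at `y`. Subtracting this gradient from the subgradient
`h` witnessing approximate optimality gives a subgradient of `ψ` at `y`. Relative strong convexity
of `ψ` for that subgradient, the three-point identity
`V[z](x) = V[z](y) + ⟪∇d y - ∇d z, x - y⟫ + V[y](x)` and `⟪h, x - y⟫ ≥ -δ̃` add up to the claim. -/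

open Filter Topology

section

variable {E : Type*} [NormedAddCommGroup E] [InnerProductSpace ℝ E]

theorem breg_three_point (d : E → ℝ) (Dd : E → E) (x y z : E) :
    breg d Dd z x = breg d Dd z y + ⟪Dd y - Dd z, x - y⟫ + breg d Dd y x := by
  have hsplit : ⟪Dd z, x - z⟫ = ⟪Dd z, y - z⟫ + ⟪Dd z, x - y⟫ := by
    rw [← inner_add_right, sub_add_sub_cancel']
  simp only [breg, hsplit, inner_sub_left]
  ring

variable [CompleteSpace E] {f g : E → ℝ} {f' g' x : E}

theorem HasGradientAt.add (hf : HasGradientAt f f' x) (hg : HasGradientAt g g' x) :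
    HasGradientAt (fun w => f w + g w) (f' + g') x := by
  rw [hasGradientAt_iff_hasFDerivAt, map_add]
  exact hf.hasFDerivAt.add hg.hasFDerivAt

theorem HasGradientAt.const_mul (c : ℝ) (hf : HasGradientAt f f' x) :
    HasGradientAt (fun w => c * f w) (c • f') x := by
  rw [hasGradientAt_iff_hasFDerivAt, map_smul]
  exact hf.hasFDerivAt.const_mul c

theorem HasGradientAt.tendsto_slope_right (hf : HasGradientAt f f' x) (v : E) :
    Tendsto (fun t : ℝ => t⁻¹ * (f (x + t • v) - f x)) (𝓝[>] 0) (𝓝 ⟪f', v⟫) := by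
  simpa using (hf.hasFDerivAt.hasLineDerivAt v).tendsto_slope_zero_right

theorem hasGradientAt_breg {d : E → ℝ} {Dd : E → E} {y : E}
    (hd : HasGradientAt d (Dd y) y) (z : E) :
    HasGradientAt (breg d Dd z) (Dd y - Dd z) y := by
  rw [hasGradientAt_iff_hasFDerivAt, map_sub]
  have hlin : HasFDerivAt (fun x => ⟪Dd z, x - z⟫) (InnerProductSpace.toDual ℝ E (Dd z)) y :=
    ((InnerProductSpace.toDual ℝ E (Dd z)).hasFDerivAt.comp y
      ((hasFDerivAt_id y).sub_const z)).congr_fderiv (by ext; simp)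
  exact (hd.hasFDerivAt.sub_const (d z)).sub hlin

/-- On `y + t • (x - y)`, `0 < t < 1`, the convex part stays below its chord while the smooth
part is linear in `t` to first order; dividing by `t` and letting `t → 0⁺` gives the inequality. -/
theorem IsSubgradOn.sub_of_hasGradientAt {Q : Set E} {ψ : E → ℝ} {y h : E}
    (hψ : ConvexOn ℝ Q ψ) (hy : y ∈ Q) (hf : HasGradientAt f f' y)
    (hh : IsSubgradOn Q (ψ + f) y h) : IsSubgradOn Q ψ y (h - f') := by
  intro x hx
  have hbound : ∀ᶠ t in 𝓝[>] (0 : ℝ),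
      ⟪h, x - y⟫ - (ψ x - ψ y) ≤ t⁻¹ * (f (y + t • (x - y)) - f y) := by
    filter_upwards [Ioo_mem_nhdsGT one_pos] with t ⟨ht0, ht1⟩
    have hseg : (1 - t) • y + t • x = y + t • (x - y) := by module
    have ht' : 0 ≤ 1 - t := by linarith
    have hconv := hψ.2 hy hx ht' ht0.le (sub_add_cancel 1 t)
    have hsub := hh _ (hψ.1 hy hx ht' ht0.le (sub_add_cancel 1 t))
    rw [hseg] at hconv hsub
    simp only [Pi.add_apply, add_sub_cancel_left, real_inner_smul_right, smul_eq_mul] at hconv hsub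
    rw [le_inv_mul_iff₀ ht0]
    linarith
  have hlim := ge_of_tendsto (hf.tendsto_slope_right (x - y)) hbound
  rw [inner_sub_left]
  linarith

end

theorem stmt1_general
    {E : Type*} [NormedAddCommGroup E] [InnerProductSpace ℝ E] [FiniteDimensional ℝ E]
    (Q : Set E)
    (d : E → ℝ) (Dd : E → E)
    (hd_diff : ∀ x, HasGradientAt d (Dd x) x)
    (m β γ δt : ℝ)
    (z u : E)
    (ψ : E → ℝ) (hψ_conv : ConvexOn ℝ Q ψ)
    (hψ_strong : StrongRelConvexOn Q (breg d Dd) m ψ)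
    (y : E)
    (hy : IsApproxMinOn Q (fun x => ψ x + β * breg d Dd z x + γ * breg d Dd u x) δt y) :
    ∀ x ∈ Q,
      ψ y + β * breg d Dd z y + γ * breg d Dd u y + (β + γ + m) * breg d Dd y x - δt ≤
        ψ x + β * breg d Dd z x + γ * breg d Dd u x := by
  intro x hx
  obtain ⟨hyQ, h, hh, hhδ⟩ := hy
  set G : E := β • (Dd y - Dd z) + γ • (Dd y - Dd u)
  have hsplit : (fun x => ψ x + β * breg d Dd z x + γ * breg d Dd u x) =
      ψ + fun x => β * breg d Dd z x + γ * breg d Dd u x := by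
    ext; simp only [Pi.add_apply]; ring
  have hG : HasGradientAt (fun x => β * breg d Dd z x + γ * breg d Dd u x) G y :=
    ((hasGradientAt_breg (hd_diff y) z).const_mul β).add
      ((hasGradientAt_breg (hd_diff y) u).const_mul γ)
  have hg : IsSubgradOn Q ψ y (h - G) :=
    IsSubgradOn.sub_of_hasGradientAt hψ_conv hyQ hG (hsplit ▸ hh)
  have hstrong := hψ_strong y hyQ _ hg x hx
  have hδ := hhδ x hx
  rw [inner_sub_left, inner_add_left, real_inner_smul_left, real_inner_smul_left] at hstrong
  rw [breg_three_point d Dd x y z, breg_three_point d Dd x y u]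
  linarith

/-- Lemma 3.6: if `ψ` is convex and `m`-strongly convex relative to `d` on `Q`
and `y` is a `δ̃`-approximate minimizer of `x ↦ ψ(x) + β·V[z](x) + γ·V[u](x)` on `Q`, then
`ψ(x) + β·V[z](x) + γ·V[u](x) ≥ ψ(y) + β·V[z](y) + γ·V[u](y) + (β + γ + m)·V[y](x) − δ̃`
for all `x ∈ Q`. -/
theorem stmt1
    {E : Type*} [NormedAddCommGroup E] [InnerProductSpace ℝ E] [FiniteDimensional ℝ E]
    (Q : Set E) (hQ : Convex ℝ Q)
    (d : E → ℝ) (Dd : E → E)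
    (hd_conv : ConvexOn ℝ Set.univ d) (hd_diff : ∀ x, HasGradientAt d (Dd x) x)
    (m β γ δt : ℝ) (hm : 0 ≤ m) (hβ : 0 ≤ β) (hγ : 0 ≤ γ) (hδt : 0 ≤ δt)
    (z u : E) (hz : z ∈ Q) (hu : u ∈ Q)
    (ψ : E → ℝ) (hψ_conv : ConvexOn ℝ Q ψ)
    (hψ_strong : StrongRelConvexOn Q (breg d Dd) m ψ)
    (y : E)
    (hy : IsApproxMinOn Q (fun x => ψ x + β * breg d Dd z x + γ * breg d Dd u x) δt y) :
    ∀ x ∈ Q,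
      ψ y + β * breg d Dd z y + γ * breg d Dd u y + (β + γ + m) * breg d Dd y x - δt ≤
        ψ x + β * breg d Dd z x + γ * breg d Dd u x :=
  stmt1_general Q d Dd hd_diff m β γ δt z u ψ hψ_conv hψ_strong y hy
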